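/- arXiv:1801.00193 — 5 statements merged into one kernel-verified Lean document; each statement's English description precedes it below -/
import Mathlib

section
/- For any two partitions λ and μ, where μ has n parts, the exchange-number N(λ, μ+n) of the concatenated weight (λ₁,…,λ_m, μ₁+n,…,μ_n+n) is at most |μ|, the number of boxes of μ. -/
/-!  STATEMENT 0 (Lemma 3.1).  For partitions λ (m parts) and μ (n parts),
`N(λ, μ+n) ≤ |μ|`.

The exchange action `σᵢ·δ = (…, δ_{i+1}−1, δ_i+1, …)` corresponds, under the shift
`τᵢ = δᵢ − i`, to the plain transposition of `τᵢ, τ_{i+1}`.  Hence `N(δ)` is finite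
(i.e. `≠ −∞`) iff the shifted sequence `τ` is injective, in which case `N(δ)` equals
the number of inversions, i.e. the number of pairs `i < j` with `τᵢ < τⱼ`. -/

/-- The exchange number `N(δ)` of a weight: the number of pairs `i < j` with
`δ i - i < δ j - j` (the length of the permutation sorting `δ` into a
non-increasing weight under the exchange action). -/
def exchNum {n : ℕ} (δ : Fin n → ℤ) : ℕ :=
  (Finset.univ.filter (fun p : Fin n × Fin n =>
    p.1 < p.2 ∧ δ p.1 - (p.1 : ℤ) < δ p.2 - (p.2 : ℤ))).card

/-- `N(δ) ≠ -∞`: some permutation makes `δ` non-increasing under the exchange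
action; equivalently the shifted sequence `i ↦ δ i - i` is injective. -/
def Sortable {n : ℕ} (δ : Fin n → ℤ) : Prop :=
  Function.Injective (fun i : Fin n => δ i - (i : ℤ))

/-! Put `aᵢ = λᵢ + m - i` and `bⱼ = μⱼ + n - j` (indices from 0). Inside each block the shifted
sequence `k ↦ δₖ - k` is strictly decreasing, so an inversion pairs some `i` of the `λ`-block with
some `j` of the `μ`-block, and `(i, j)` is an inversion iff `aᵢ < bⱼ`. Sortability makes all the
`aᵢ` and `bⱼ` distinct. For fixed `j`, the `aᵢ < bⱼ` and the `bⱼ'` with `j' > j` are then distinct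
integers in the open interval `(0, bⱼ)`, so there are at most `bⱼ - 1 - (n - 1 - j) = μⱼ` of the
former. -/

open Finset

theorem card_filter_lt_le {m n : ℕ} (a : Fin m → ℤ) (b : Fin n → ℤ)
    (hab : Function.Injective (Fin.append a b)) (ha : ∀ i, 0 < a i) (hb : StrictAnti b)
    (hb_pos : ∀ j, 0 < b j) (j : Fin n) :
    (#{i | a i < b j} : ℤ) ≤ b j - (n - j) := by
  have ha_inj : Function.Injective a := fun i i' h =>
    Fin.castAdd_injective m n (hab (by simpa using h))
  have hb_inj : Function.Injective b := hb.injective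
  set s := ({i | a i < b j} : Finset (Fin m)).image a
  set t := (Ioi j).image b
  have hs : s ⊆ Ioo 0 (b j) := by
    simp only [s, subset_iff, mem_image, mem_filter, mem_univ, true_and, mem_Ioo]
    rintro _ ⟨i, hi, rfl⟩
    exact ⟨ha i, hi⟩
  have ht : t ⊆ Ioo 0 (b j) := by
    simp only [t, subset_iff, mem_image, mem_Ioi, mem_Ioo]
    rintro _ ⟨j', hj', rfl⟩
    exact ⟨hb_pos j', hb hj'⟩
  have hst : Disjoint s t := by
    simp only [s, t, disjoint_left, mem_image, not_exists, not_and]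
    rintro _ ⟨i, -, rfl⟩ j' - h
    have hij := hab (a₁ := Fin.castAdd n i) (a₂ := Fin.natAdd m j') (by simpa using h.symm)
    rw [Fin.ext_iff, Fin.val_castAdd, Fin.val_natAdd] at hij
    omega
  have hcard := card_le_card (union_subset hs ht)
  rw [card_union_of_disjoint hst, card_image_of_injective _ ha_inj,
    card_image_of_injective _ hb_inj, Fin.card_Ioi, Int.card_Ioo] at hcard
  have := hb_pos j
  omega

theorem exchNum_append_le {m n : ℕ} (u : Fin m → ℤ) (v : Fin n → ℤ)
    (hu : Antitone fun i : Fin m => u i - i) (hv : Antitone fun j : Fin n => v j - j) :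
    exchNum (Fin.append u v) ≤ ∑ j, #{i | u i + m - i < v j - j} := by
  have hsum : ∑ j, #{i | u i + m - i < v j - j}
      = #(univ.filter fun p : Fin m × Fin n => u p.1 + m - p.1 < v p.2 - p.2) := by
    simp only [card_filter, Fintype.sum_prod_type_right]
  rw [hsum, exchNum]
  refine (card_le_card ?_).trans
    (card_image_le (f := fun p : Fin m × Fin n => (Fin.castAdd n p.1, Fin.natAdd m p.2)))
  intro ⟨k, l⟩
  simp only [mem_filter, mem_univ, true_and, mem_image, Prod.mk.injEq, Prod.exists]
  induction k using Fin.addCases with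
  | left i =>
    induction l using Fin.addCases with
    | left i' =>
      rintro ⟨hlt, hinv⟩
      have := hu (show i ≤ i' from hlt.le)
      simp only [Fin.append_left, Fin.val_castAdd] at hinv this
      omega
    | right j =>
      rintro ⟨-, hinv⟩
      simp only [Fin.append_left, Fin.append_right, Fin.val_castAdd, Fin.val_natAdd,
        Nat.cast_add] at hinv
      exact ⟨i, j, by omega, rfl, rfl⟩
  | right j =>
    induction l using Fin.addCases with
    | left i' =>
      rintro ⟨hlt, -⟩
      have : m + (j : ℕ) < i' := hlt
      omega
    | right j' =>
      rintro ⟨hlt, hinv⟩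
      have := hv ((Fin.natAdd_lt_natAdd_iff m).mp hlt).le
      simp only [Fin.append_right, Fin.val_natAdd, Nat.cast_add] at hinv this
      omega

theorem stmt_0 {m n : ℕ} (lam : Fin m → ℕ) (mu : Fin n → ℕ)
    (hlam : Antitone lam) (hmu : Antitone mu)
    (δ : Fin (m + n) → ℤ)
    (hδ : δ = Fin.append (fun i => (lam i : ℤ)) (fun j => (mu j : ℤ) + (n : ℤ)))
    (hsort : Sortable δ) :
    exchNum δ ≤ ∑ j, mu j := by
  set a : Fin m → ℤ := fun i => lam i + m - i
  set b : Fin n → ℤ := fun j => mu j + n - j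
  have hb : StrictAnti b := fun j j' h => by
    have := hmu h.le
    have : (j : ℕ) < j' := h
    simp only [b]
    omega
  have hab : Function.Injective (Fin.append a b) := by
    have : Fin.append a b = fun k => δ k - k + m := by
      funext k
      induction k using Fin.addCases <;>
        simp only [hδ, a, b, Fin.append_left, Fin.append_right, Fin.val_castAdd, Fin.val_natAdd,
          Nat.cast_add] <;> ring
    rw [this]
    exact (add_left_injective _).comp hsort
  have hcount (j : Fin n) : #{i | a i < b j} ≤ mu j := by
    have := card_filter_lt_le a b hab (fun i => by simp only [a]; omega) hb
      (fun j => by simp only [b]; omega) j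
    simp only [b] at this ⊢
    omega
  calc exchNum δ ≤ ∑ j, #{i | a i < b j} := hδ ▸
        exchNum_append_le _ _ (fun i i' h => by have := hlam h; dsimp only; omega)
          (fun j j' h => by have := hmu h; dsimp only; omega)
    _ ≤ ∑ j, mu j := sum_le_sum fun j _ => hcount j
end

section
/- For any two partitions λ and μ, the exchange-number N(−λ, μ) of the concatenated weight (−λ_m,…,−λ₁, μ₁,…,μ_n) satisfies N(−λ,μ) ≤ |λ⁺| + |μ⁺| + u_λ·u_μ, where u_λ, u_μ are the Durfee square sizes and λ⁺, μ⁺ are the parts of the Young diagrams to the right of the Durfee squares. -/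
/-- The Durfee square size of a partition `λ` (a non-increasing sequence of
naturals): the number of indices `i` (0-indexed) with `λ_i ≥ i+1`, i.e. the
largest `u` with `λ_u ≥ u` (1-indexed). -/
def durfee {n : ℕ} (lam : Fin n → ℕ) : ℕ :=
  (Finset.univ.filter (fun i : Fin n => (i : ℕ) + 1 ≤ lam i)).card

/-- `|λ⁺|`: the number of boxes to the right of the Durfee square,
`∑_{i < u_λ} (λ_i − u_λ)`. -/
def plusSum {n : ℕ} (lam : Fin n → ℕ) : ℕ :=
  ∑ i ∈ Finset.univ.filter (fun i : Fin n => (i : ℕ) + 1 ≤ lam i), (lam i - durfee lam)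

open Finset Function

section FrobeniusCoordinates

variable {m : ℕ} {lam : Fin m → ℕ}

/-- The Frobenius coordinate `λ_a − a − 1` (0-indexed), extended to all rows; it is
nonnegative exactly on the rows of the Durfee square. -/
def frobCoord (lam : Fin m → ℕ) (a : Fin m) : ℤ := lam a - (a + 1)

theorem frobCoord_strictAnti (hlam : Antitone lam) : StrictAnti (frobCoord lam) := by
  intro a b hab
  have : (lam b : ℤ) ≤ lam a := by exact_mod_cast hlam hab.le
  have : (a : ℤ) < b := by exact_mod_cast hab
  simp only [frobCoord]
  omega

theorem card_durfee_gt_add (hlam : Antitone lam) {a : Fin m} (ha : (a : ℕ) + 1 ≤ lam a) :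
    #{b : Fin m | (b : ℕ) + 1 ≤ lam b ∧ a < b} + ((a : ℕ) + 1) = durfee lam := by
  have hIic : ({b | (b : ℕ) + 1 ≤ lam b ∧ b ≤ a} : Finset (Fin m)) = Iic a := by
    ext b
    simp only [mem_filter, mem_univ, true_and, mem_Iic, and_iff_right_iff_imp]
    intro hba
    have : lam a ≤ lam b := hlam hba
    have : (b : ℕ) ≤ a := hba
    omega
  calc #{b : Fin m | (b : ℕ) + 1 ≤ lam b ∧ a < b} + ((a : ℕ) + 1)
      = #{b : Fin m | (b : ℕ) + 1 ≤ lam b ∧ b ≤ a}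
        + #{b : Fin m | (b : ℕ) + 1 ≤ lam b ∧ ¬b ≤ a} := by
        simp only [hIic, Fin.card_Iic, not_le, add_comm]
    _ = durfee lam := by
        rw [durfee, ← filter_filter, ← filter_filter, card_filter_add_card_filter_not]

end FrobeniusCoordinates

theorem card_add_card_le_of_add_ne_neg_one {ι κ : Type*} [Fintype ι] [Fintype κ]
    {x : ι → ℤ} {y : κ → ℤ} (hx : Injective x) (hy : Injective y)
    (h : ∀ b q, x b + y q ≠ -1) (t : ℤ) :
    #{q | -t ≤ y q ∧ y q < 0} + #{b | 0 ≤ x b ∧ x b < t} ≤ t.toNat := by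
  classical
  set Q : Finset κ := {q | -t ≤ y q ∧ y q < 0}
  set B : Finset ι := {b | 0 ≤ x b ∧ x b < t}
  have hdisj : Disjoint (Q.image (fun q => -1 - y q)) (B.image x) := by
    simp only [disjoint_left, mem_image, not_exists, not_and]
    rintro _ ⟨q, -, rfl⟩ b - hb
    exact h b q (by omega)
  have hsub : Q.image (fun q => -1 - y q) ∪ B.image x ⊆ Ico 0 t := by
    intro v
    simp only [Q, B, mem_union, mem_image, mem_filter, mem_univ, true_and, mem_Ico]
    rintro (⟨q, hq, rfl⟩ | ⟨b, hb, rfl⟩) <;> omega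
  calc #Q + #B = #(Q.image (fun q => -1 - y q) ∪ B.image x) := by
        rw [card_union_of_disjoint hdisj, card_image_of_injective _ hx,
          card_image_of_injective _ fun q q' e => hy (by simpa using e)]
    _ ≤ #(Ico 0 t) := card_le_card hsub
    _ = t.toNat := by simp

section CrossPairs

variable {m : ℕ} {lam : Fin m → ℕ} {κ : Type*} [Fintype κ] {y : κ → ℤ}

theorem card_fiber_le_sub_durfee (hlam : Antitone lam) (hy : Injective y)
    (h : ∀ a q, frobCoord lam a + y q ≠ -1) {a : Fin m} (ha : (a : ℕ) + 1 ≤ lam a) :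
    #{q | y q < 0 ∧ 0 ≤ frobCoord lam a + y q} ≤ lam a - durfee lam := by
  have hx := frobCoord_strictAnti hlam
  have hbelow : #{b | 0 ≤ frobCoord lam b ∧ frobCoord lam b < frobCoord lam a}
      = #{b : Fin m | (b : ℕ) + 1 ≤ lam b ∧ a < b} := by
    congr 1
    ext b
    simp only [mem_filter, mem_univ, true_and, hx.lt_iff_gt]
    simp only [frobCoord]
    omega
  have hfiber : #{q | y q < 0 ∧ 0 ≤ frobCoord lam a + y q}
      = #{q | -frobCoord lam a ≤ y q ∧ y q < 0} := by
    congr 1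
    ext q
    simp only [mem_filter, mem_univ, true_and]
    omega
  have hcount := card_add_card_le_of_add_ne_neg_one hx.injective hy h (frobCoord lam a)
  have hdurfee := card_durfee_gt_add hlam ha
  rw [hbelow, ← hfiber] at hcount
  have : (frobCoord lam a).toNat = lam a - (a + 1) := by
    simp only [frobCoord]
    omega
  omega

theorem card_cross_neg_le_plusSum (hlam : Antitone lam) (hy : Injective y)
    (h : ∀ a q, frobCoord lam a + y q ≠ -1) :
    #{p : Fin m × κ | y p.2 < 0 ∧ 0 ≤ frobCoord lam p.1 + y p.2} ≤ plusSum lam := by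
  classical
  calc #{p : Fin m × κ | y p.2 < 0 ∧ 0 ≤ frobCoord lam p.1 + y p.2}
      = ∑ a, #{q | y q < 0 ∧ 0 ≤ frobCoord lam a + y q} := by
        simp only [card_filter, Fintype.sum_prod_type]
    _ = ∑ a ∈ univ.filter (fun a : Fin m => (a : ℕ) + 1 ≤ lam a),
          #{q | y q < 0 ∧ 0 ≤ frobCoord lam a + y q} := by
        refine (sum_filter_of_ne fun a _ hne => ?_).symm
        obtain ⟨q, hq⟩ := card_ne_zero.mp hne
        have := (mem_filter.mp hq).2
        simp only [frobCoord] at this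
        omega
    _ ≤ plusSum lam := sum_le_sum fun a ha =>
        card_fiber_le_sub_durfee hlam hy h (mem_filter.mp ha).2

end CrossPairs

theorem card_cross_le {m n : ℕ} {lam : Fin m → ℕ} {mu : Fin n → ℕ}
    (hlam : Antitone lam) (hmu : Antitone mu)
    (h : ∀ a q, frobCoord lam a + frobCoord mu q ≠ -1) :
    #{p : Fin m × Fin n | 0 ≤ frobCoord lam p.1 + frobCoord mu p.2}
      ≤ plusSum lam + plusSum mu + durfee lam * durfee mu := by
  set x := frobCoord lam
  set y := frobCoord mu
  have hswap : #{p : Fin m × Fin n | x p.1 < 0 ∧ 0 ≤ x p.1 + y p.2}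
      = #{p : Fin n × Fin m | x p.2 < 0 ∧ 0 ≤ y p.1 + x p.2} :=
    card_nbij' Prod.swap Prod.swap (by intro p; simp [add_comm]) (by intro p; simp [add_comm])
      (fun _ _ => rfl) (fun _ _ => rfl)
  have hcover : ({p | 0 ≤ x p.1 + y p.2} : Finset (Fin m × Fin n))
      ⊆ ({p | y p.2 < 0 ∧ 0 ≤ x p.1 + y p.2} : Finset _)
        ∪ ({p | x p.1 < 0 ∧ 0 ≤ x p.1 + y p.2} : Finset _)
        ∪ (({a : Fin m | (a : ℕ) + 1 ≤ lam a} : Finset _)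
          ×ˢ ({q : Fin n | (q : ℕ) + 1 ≤ mu q} : Finset _)) := by
    intro p
    simp only [mem_union, mem_product, mem_filter, mem_univ, true_and, x, y, frobCoord]
    omega
  calc #{p : Fin m × Fin n | 0 ≤ x p.1 + y p.2}
      ≤ #{p : Fin m × Fin n | y p.2 < 0 ∧ 0 ≤ x p.1 + y p.2}
        + #{p : Fin n × Fin m | x p.2 < 0 ∧ 0 ≤ y p.1 + x p.2} + durfee lam * durfee mu := by
        rw [← hswap, durfee, durfee, ← card_product]
        exact (card_le_card hcover).trans ((card_union_le _ _).trans
          (Nat.add_le_add_right (card_union_le _ _) _))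
    _ ≤ plusSum lam + plusSum mu + durfee lam * durfee mu := by
        gcongr
        · exact card_cross_neg_le_plusSum hlam (frobCoord_strictAnti hmu).injective h
        · exact card_cross_neg_le_plusSum hmu (frobCoord_strictAnti hlam).injective
            fun q a => by rw [add_comm]; exact h a q

section Append

variable {m n : ℕ} {f : Fin m → ℤ} {g : Fin n → ℤ}

theorem exchNum_append (hf : Antitone fun i : Fin m => f i - i)
    (hg : Antitone fun j : Fin n => g j - j) :
    exchNum (Fin.append f g) = #{p : Fin m × Fin n | f p.1 - p.1 < g p.2 - (m + p.2)} := by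
  symm
  refine card_bij (fun p _ => (Fin.castAdd n p.1, Fin.natAdd m p.2)) ?_ ?_ ?_
  · rintro ⟨i, j⟩ hij
    simp only [mem_filter, mem_univ, true_and, Fin.append_left, Fin.append_right, Fin.lt_def,
      Fin.val_castAdd, Fin.val_natAdd] at hij ⊢
    push_cast
    omega
  · rintro ⟨i, j⟩ _ ⟨i', j'⟩ _ h
    simp only [Prod.mk.injEq, Fin.castAdd_inj, Fin.natAdd_inj] at h ⊢
    exact h
  · rintro ⟨i, j⟩ hij
    simp only [mem_filter, mem_univ, true_and] at hij
    obtain ⟨hlt, hinv⟩ := hij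
    induction i using Fin.addCases with
    | left i =>
      induction j using Fin.addCases with
      | left j =>
        have := hf ((Fin.strictMono_castAdd n).lt_iff_lt.mp hlt).le
        simp only [Fin.append_left, Fin.val_castAdd] at hinv this
        omega
      | right j =>
        refine ⟨(i, j), ?_, rfl⟩
        simp only [Fin.append_left, Fin.append_right, Fin.val_castAdd, Fin.val_natAdd] at hinv
        simp only [mem_filter, mem_univ, true_and]
        push_cast at hinv
        omega
    | right i =>
      induction j using Fin.addCases with
      | left j =>
        simp only [Fin.lt_def, Fin.val_castAdd, Fin.val_natAdd] at hlt
        omega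
      | right j =>
        have := hg ((Fin.natAdd_lt_natAdd_iff m).mp hlt).le
        simp only [Fin.append_right, Fin.val_natAdd] at hinv this
        push_cast at hinv
        omega

theorem add_ne_of_sortable_append (hδ : Sortable (Fin.append f g)) (i : Fin m) (j : Fin n) :
    f i - i ≠ g j - (m + j) := by
  intro h
  have := congrArg Fin.val (@hδ (Fin.castAdd n i) (Fin.natAdd m j) (by
    simp only [Fin.append_left, Fin.append_right, Fin.val_castAdd, Fin.val_natAdd]
    push_cast
    omega))
  simp only [Fin.val_castAdd, Fin.val_natAdd] at this
  omega

end Append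

section NegAppend

variable {m n : ℕ} {lam : Fin m → ℕ} {mu : Fin n → ℕ}

theorem exchNum_neg_append (hlam : Antitone lam) (hmu : Antitone mu) :
    exchNum (Fin.append (fun i => -(lam (Fin.rev i) : ℤ)) (fun j => (mu j : ℤ)))
      = #{p : Fin m × Fin n | 0 ≤ frobCoord lam p.1 + frobCoord mu p.2} := by
  rw [exchNum_append]
  · refine card_nbij' (fun p => (p.1.rev, p.2)) (fun p => (p.1.rev, p.2)) ?_ ?_
      (fun p _ => by simp) (fun p _ => by simp)
    all_goals
      rintro ⟨i, j⟩ hp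
      have := Fin.val_rev i
      have := i.isLt
      simp only [mem_coe, mem_filter, mem_univ, true_and] at hp ⊢
      simp only [Fin.rev_rev, frobCoord] at hp ⊢
      omega
  · intro i j hij
    have : lam i.rev ≤ lam j.rev := hlam (Fin.rev_le_rev.mpr hij)
    have : (i : ℕ) ≤ j := hij
    dsimp only
    omega
  · intro i j hij
    have : mu j ≤ mu i := hmu hij
    have : (i : ℕ) ≤ j := hij
    dsimp only
    omega

theorem frobCoord_add_ne_of_sortable
    (hδ : Sortable (Fin.append (fun i => -(lam (Fin.rev i) : ℤ)) (fun j => (mu j : ℤ))))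
    (a : Fin m) (q : Fin n) : frobCoord lam a + frobCoord mu q ≠ -1 := by
  have hne := add_ne_of_sortable_append hδ a.rev q
  have := Fin.val_rev a
  have := a.isLt
  simp only [Fin.rev_rev] at hne
  simp only [frobCoord]
  omega

end NegAppend

theorem stmt_1 {m n : ℕ} (lam : Fin m → ℕ) (mu : Fin n → ℕ)
    (hlam : Antitone lam) (hmu : Antitone mu)
    (δ : Fin (m + n) → ℤ)
    (hδ : δ = Fin.append (fun i => -(lam (Fin.rev i) : ℤ)) (fun j => (mu j : ℤ)))
    (hsort : Sortable δ) :
    exchNum δ ≤ plusSum lam + plusSum mu + durfee lam * durfee mu := by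
  subst hδ
  rw [exchNum_neg_append hlam hmu]
  exact card_cross_le hlam hmu (frobCoord_add_ne_of_sortable hsort)
end

section
/- If ν is a partition occurring in the Littlewood–Richardson product of partitions λ and μ, then for every k ∈ ℕ one has ν₁+⋯+ν_k ≤ λ₁+⋯+λ_k + μ₁+⋯+μ_k. -/
/-!
Schur polynomials in `n` variables are encoded through the bialternant formula
`s_κ = a_{κ+ρ} / a_ρ`, where `a_τ = det(xᵢ^{τ_j})` and `ρ = (n-1,…,1,0)`, so the expansion
`s_λ s_μ = Σ_κ c_κ s_κ` becomes the polynomial identity `a_{λ+ρ} a_{μ+ρ} = a_ρ Σ_κ c_κ a_{κ+ρ}`.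

Substitute `xᵢ ↦ t^{wᵢ}` for a decreasing weight `w`. By the rearrangement inequality the
diagonal term of `a_{κ+ρ}` has the largest `t`-degree, `⟨w, κ+ρ⟩`; when `w` separates all
exponent vectors with entries below some bound `B`, nothing else reaches the monomial
`t^{⟨w, ν+ρ⟩}`, whose coefficient in `Σ_κ c_κ a_{κ+ρ}` is therefore `c_ν ≠ 0`. Comparing degrees
on both sides of the identity gives `⟨w, ν⟩ ≤ ⟨w, λ⟩ + ⟨w, μ⟩`. For the weight
`wᵢ = Bⁿ·[i < k] + B^{n-1-i}` the low-order parts stay below `Bⁿ`, and the `Bⁿ`-part of this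
inequality is the claim.
-/

open MvPolynomial in
/-- The alternant `a_{κ+ρ} = det(xᵢ^{κ_j + n - 1 - j})` (0-indexed `j`). -/
noncomputable def altPoly {n : ℕ} (κ : Fin n → ℕ) : MvPolynomial (Fin n) ℤ :=
  Matrix.det (Matrix.of fun i j : Fin n =>
    (X i : MvPolynomial (Fin n) ℤ) ^ (κ j + (n - 1 - (j : ℕ))))

open Polynomial Finset

section Alternant

variable {n : ℕ}

def altExp (κ : Fin n → ℕ) (j : Fin n) : ℕ := κ j + (n - 1 - (j : ℕ))

lemma altExp_strictAnti {κ : Fin n → ℕ} (hκ : Antitone κ) : StrictAnti (altExp κ) := by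
  intro i j hij
  have := hκ hij.le
  have : (i : ℕ) < j := hij
  have := j.isLt
  simp only [altExp]
  omega

lemma altExp_injective : Function.Injective (altExp (n := n)) := fun κ κ' h =>
  funext fun j => by simpa [altExp] using congrFun h j

lemma altExp_eq_add (κ : Fin n → ℕ) (j : Fin n) : altExp κ j = κ j + altExp (fun _ => 0) j := by
  simp [altExp]

lemma aeval_altPoly (w κ : Fin n → ℕ) :
    MvPolynomial.aeval (fun i => (X : ℤ[X]) ^ w i) (altPoly κ) =
      ∑ σ : Equiv.Perm (Fin n), (σ.sign : ℤ) • X ^ ∑ j, w (σ j) * altExp κ j := by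
  rw [altPoly, AlgHom.map_det, Matrix.det_apply]
  refine sum_congr rfl fun σ _ => ?_
  simp [Units.smul_def, altExp, ← prod_pow_eq_pow_sum, pow_mul]

lemma natDegree_aeval_altPoly_le {w κ : Fin n → ℕ} (hw : Antitone w) (hκ : Antitone κ) :
    (MvPolynomial.aeval (fun i => (X : ℤ[X]) ^ w i) (altPoly κ)).natDegree ≤
      ∑ j, w j * altExp κ j := by
  rw [aeval_altPoly]
  refine natDegree_sum_le_of_forall_le _ _ fun σ _ => (natDegree_smul_le _ _).trans ?_
  rw [natDegree_X_pow]
  exact (hw.monovary (altExp_strictAnti hκ).antitone).sum_comp_perm_smul_le_sum_smul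

lemma eq_and_eq_one_of_sum_altExp_eq {w : Fin n → ℕ} {B : ℕ}
    (hw : Set.InjOn (fun α : Fin n → ℕ => ∑ i, w i * α i) {α | ∀ i, α i < B})
    {κ κ' : Fin n → ℕ} (hκ : Antitone κ) (hκ' : Antitone κ')
    (hκB : ∀ j, altExp κ j < B) (hκ'B : ∀ j, altExp κ' j < B) {σ : Equiv.Perm (Fin n)}
    (h : ∑ j, w (σ j) * altExp κ j = ∑ j, w j * altExp κ' j) : κ = κ' ∧ σ = 1 := by
  have hcomp : altExp κ ∘ σ.symm = altExp κ' := by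
    refine hw (fun i => hκB _) hκ'B ?_
    simpa [← h] using (Equiv.sum_comp σ (fun i => w i * altExp κ (σ.symm i))).symm
  have hσ : StrictMono σ.symm := fun i j hij =>
    (altExp_strictAnti hκ).lt_iff_gt.1 <| by
      simpa [← hcomp] using (altExp_strictAnti hκ') hij
  obtain rfl : σ = 1 := inv_eq_one.1 <| Equiv.ext fun i => congrFun hσ.eq_id i
  exact ⟨altExp_injective hcomp, rfl⟩

lemma coeff_aeval_altPoly {w : Fin n → ℕ} {B : ℕ}
    (hw : Set.InjOn (fun α : Fin n → ℕ => ∑ i, w i * α i) {α | ∀ i, α i < B})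
    {κ κ' : Fin n → ℕ} (hκ : Antitone κ) (hκ' : Antitone κ')
    (hκB : ∀ j, altExp κ j < B) (hκ'B : ∀ j, altExp κ' j < B) :
    (MvPolynomial.aeval (fun i => (X : ℤ[X]) ^ w i) (altPoly κ)).coeff
      (∑ j, w j * altExp κ' j) = if κ = κ' then 1 else 0 := by
  have hterm : ∀ σ : Equiv.Perm (Fin n),
      ((σ.sign : ℤ) • (X : ℤ[X]) ^ ∑ j, w (σ j) * altExp κ j).coeff (∑ j, w j * altExp κ' j) =
        if σ = 1 ∧ κ = κ' then 1 else 0 := by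
    intro σ
    rw [coeff_smul, coeff_X_pow]
    by_cases h : ∑ j, w j * altExp κ' j = ∑ j, w (σ j) * altExp κ j
    · obtain ⟨rfl, rfl⟩ := eq_and_eq_one_of_sum_altExp_eq hw hκ hκ' hκB hκ'B h.symm
      simp
    · rw [if_neg h, if_neg]
      · simp
      · rintro ⟨rfl, rfl⟩
        simp at h
  rw [aeval_altPoly, finsetSum_coeff, sum_congr rfl fun σ _ => hterm σ]
  simp [ite_and]

lemma coeff_aeval_sum_smul_altPoly {w : Fin n → ℕ} {B : ℕ}
    (hw : Set.InjOn (fun α : Fin n → ℕ => ∑ i, w i * α i) {α | ∀ i, α i < B})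
    {S : Finset (Fin n → ℕ)} (hS : ∀ κ ∈ S, Antitone κ) (hSB : ∀ κ ∈ S, ∀ j, altExp κ j < B)
    (c : (Fin n → ℕ) → ℤ) {ν : Fin n → ℕ} (hνS : ν ∈ S) :
    (MvPolynomial.aeval (fun i => (X : ℤ[X]) ^ w i) (∑ κ ∈ S, c κ • altPoly κ)).coeff
      (∑ j, w j * altExp ν j) = c ν := by
  rw [map_sum, finsetSum_coeff, sum_eq_single_of_mem ν hνS]
  · rw [map_zsmul, coeff_smul, coeff_aeval_altPoly hw (hS ν hνS) (hS ν hνS)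
      (hSB ν hνS) (hSB ν hνS), if_pos rfl, smul_eq_mul, mul_one]
  · intro κ hκ hκν
    rw [map_zsmul, coeff_smul, coeff_aeval_altPoly hw (hS κ hκ) (hS ν hνS)
      (hSB κ hκ) (hSB ν hνS), if_neg hκν, smul_zero]

theorem sum_mul_le_of_altPoly_mul_eq {w : Fin n → ℕ} {B : ℕ} (hw : Antitone w)
    (hwB : Set.InjOn (fun α : Fin n → ℕ => ∑ i, w i * α i) {α | ∀ i, α i < B})
    {lam mu nu : Fin n → ℕ} (hlam : Antitone lam) (hmu : Antitone mu)
    {S : Finset (Fin n → ℕ)} (hS : ∀ κ ∈ S, Antitone κ) (hSB : ∀ κ ∈ S, ∀ j, altExp κ j < B)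
    (hnB : n ≤ B) {c : (Fin n → ℕ) → ℤ}
    (hexp : altPoly lam * altPoly mu = altPoly (fun _ => 0) * ∑ κ ∈ S, c κ • altPoly κ)
    (hnuS : nu ∈ S) (hcnu : c nu ≠ 0) :
    ∑ i, w i * nu i ≤ ∑ i, w i * lam i + ∑ i, w i * mu i := by
  set φ := MvPolynomial.aeval (R := ℤ) (fun i => (X : ℤ[X]) ^ w i)
  set D : (Fin n → ℕ) → ℕ := fun κ => ∑ j, w j * altExp κ j
  set ρ : Fin n → ℕ := fun _ => 0
  have hρB : ∀ j, altExp ρ j < B := fun j => by simp [ρ, altExp]; omega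
  have hρ : (φ (altPoly ρ)).coeff (D ρ) = 1 := by
    simpa using coeff_aeval_altPoly hwB antitone_const antitone_const hρB hρB
  have hν : (φ (∑ κ ∈ S, c κ • altPoly κ)).coeff (D nu) = c nu :=
    coeff_aeval_sum_smul_altPoly hwB hS hSB c hnuS
  have hlow : D ρ + D nu ≤ (φ (altPoly lam * altPoly mu)).natDegree := by
    have hρ0 : (φ (altPoly ρ)).coeff (D ρ) ≠ 0 := hρ ▸ one_ne_zero
    have hν0 : (φ (∑ κ ∈ S, c κ • altPoly κ)).coeff (D nu) ≠ 0 := hν ▸ hcnu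
    have ne_zero {p : ℤ[X]} {d : ℕ} (h : p.coeff d ≠ 0) : p ≠ 0 := fun hp => h (by simp [hp])
    rw [hexp, map_mul, natDegree_mul (ne_zero hρ0) (ne_zero hν0)]
    exact add_le_add (le_natDegree_of_ne_zero hρ0) (le_natDegree_of_ne_zero hν0)
  have hhigh : (φ (altPoly lam * altPoly mu)).natDegree ≤ D lam + D mu := by
    rw [map_mul]
    exact natDegree_mul_le.trans
      (add_le_add (natDegree_aeval_altPoly_le hw hlam) (natDegree_aeval_altPoly_le hw hmu))
  have hD : ∀ κ, D κ = ∑ i, w i * κ i + D ρ := fun κ => by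
    simp only [D, ρ, ← sum_add_distrib, ← mul_add, altExp_eq_add κ]
  have := hlow.trans hhigh
  rw [hD nu, hD lam, hD mu] at this
  omega

end Alternant

section Weight

variable {n : ℕ}

lemma sum_mul_pow_rev_eq_finFunctionFinEquiv {B : ℕ} {α : Fin n → ℕ} (hα : ∀ i, α i < B) :
    ∑ i, α i * B ^ (i.rev : ℕ) = finFunctionFinEquiv (fun i => (⟨α i.rev, hα _⟩ : Fin B)) := by
  rw [finFunctionFinEquiv_apply, ← Equiv.sum_comp Fin.revPerm]
  simp

lemma sum_mul_pow_rev_lt {B : ℕ} {α : Fin n → ℕ} (hα : ∀ i, α i < B) :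
    ∑ i, α i * B ^ (i.rev : ℕ) < B ^ n := by
  rw [sum_mul_pow_rev_eq_finFunctionFinEquiv hα]
  exact Fin.isLt _

lemma injOn_sum_mul_pow_rev (B : ℕ) :
    Set.InjOn (fun α : Fin n → ℕ => ∑ i, α i * B ^ (i.rev : ℕ)) {α | ∀ i, α i < B} := by
  intro α hα β hβ h
  simp only [sum_mul_pow_rev_eq_finFunctionFinEquiv hα, sum_mul_pow_rev_eq_finFunctionFinEquiv hβ,
    Fin.val_inj, finFunctionFinEquiv.apply_eq_iff_eq, funext_iff, Fin.ext_iff] at h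
  exact funext fun i => by simpa using h i.rev

def prefixWeight (B k : ℕ) (i : Fin n) : ℕ :=
  (if (i : ℕ) < k then B ^ n else 0) + B ^ (i.rev : ℕ)

lemma prefixWeight_antitone {B : ℕ} (hB : 0 < B) (k : ℕ) :
    Antitone (prefixWeight (n := n) B k) := by
  intro i j hij
  have hrev : B ^ (j.rev : ℕ) ≤ B ^ (i.rev : ℕ) := Nat.pow_le_pow_right hB (Fin.rev_le_rev.2 hij)
  have : (i : ℕ) ≤ j := hij
  unfold prefixWeight
  split_ifs <;> omega

lemma sum_prefixWeight_mul (B k : ℕ) (α : Fin n → ℕ) :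
    ∑ i, prefixWeight B k i * α i =
      B ^ n * ∑ i ∈ univ.filter (fun i : Fin n => (i : ℕ) < k), α i +
        ∑ i, α i * B ^ (i.rev : ℕ) := by
  rw [mul_sum, sum_filter, ← sum_add_distrib]
  refine sum_congr rfl fun i _ => ?_
  unfold prefixWeight
  split_ifs <;> ring

lemma injOn_sum_prefixWeight_mul {B : ℕ} (k : ℕ) :
    Set.InjOn (fun α : Fin n → ℕ => ∑ i, prefixWeight B k i * α i) {α | ∀ i, α i < B} := by
  intro α hα β hβ h
  simp only [sum_prefixWeight_mul] at h
  refine injOn_sum_mul_pow_rev B hα hβ ?_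
  have hmod := congrArg (· % B ^ n) h
  simp only [Nat.mul_add_mod] at hmod
  rwa [Nat.mod_eq_of_lt (sum_mul_pow_rev_lt hα), Nat.mod_eq_of_lt (sum_mul_pow_rev_lt hβ)] at hmod

lemma sum_filter_le_of_sum_prefixWeight_mul_le {B k : ℕ} {lam mu nu : Fin n → ℕ}
    (hB : ∀ i, lam i + mu i < B)
    (h : ∑ i, prefixWeight B k i * nu i ≤
      ∑ i, prefixWeight B k i * lam i + ∑ i, prefixWeight B k i * mu i) :
    ∑ i ∈ univ.filter (fun i : Fin n => (i : ℕ) < k), nu i ≤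
      ∑ i ∈ univ.filter (fun i : Fin n => (i : ℕ) < k), lam i +
        ∑ i ∈ univ.filter (fun i : Fin n => (i : ℕ) < k), mu i := by
  simp only [sum_prefixWeight_mul] at h
  have hlow : ∑ i, lam i * B ^ (i.rev : ℕ) + ∑ i, mu i * B ^ (i.rev : ℕ) < B ^ n := by
    simpa only [← sum_add_distrib, ← add_mul] using sum_mul_pow_rev_lt hB
  refine Nat.lt_succ_iff.1 (Nat.lt_of_mul_lt_mul_left (a := B ^ n) ?_)
  rw [Nat.mul_succ, mul_add]
  omega

end Weight

theorem stmt_3_general {n : ℕ} (lam mu nu : Fin n → ℕ)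
    (hlam : Antitone lam) (hmu : Antitone mu)
    (S : Finset (Fin n → ℕ)) (hS : ∀ κ ∈ S, Antitone κ)
    (c : (Fin n → ℕ) → ℤ)
    (hexp : altPoly lam * altPoly mu =
      altPoly (fun _ => 0) * ∑ κ ∈ S, c κ • altPoly κ)
    (hnuS : nu ∈ S) (hcnu : c nu ≠ 0) (k : ℕ) :
    ∑ i ∈ Finset.univ.filter (fun i : Fin n => (i : ℕ) < k), nu i ≤
      (∑ i ∈ Finset.univ.filter (fun i : Fin n => (i : ℕ) < k), lam i) +
        ∑ i ∈ Finset.univ.filter (fun i : Fin n => (i : ℕ) < k), mu i := by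
  have le_sum (κ : Fin n → ℕ) (i : Fin n) : κ i ≤ ∑ j, κ j :=
    single_le_sum (fun _ _ => Nat.zero_le _) (mem_univ i)
  set B := n + ∑ i, lam i + ∑ i, mu i + ∑ κ ∈ S, ∑ i, κ i + 1
  have hSB : ∀ κ ∈ S, ∀ j, altExp κ j < B := fun κ hκ j => by
    have := (le_sum κ j).trans (single_le_sum (f := fun κ : Fin n → ℕ => ∑ i, κ i)
      (fun _ _ => Nat.zero_le _) hκ)
    simp only [altExp]
    omega
  have hlmB : ∀ i, lam i + mu i < B := fun i => by
    have := le_sum lam i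
    have := le_sum mu i
    omega
  exact sum_filter_le_of_sum_prefixWeight_mul_le hlmB <|
    sum_mul_le_of_altPoly_mul_eq (prefixWeight_antitone (by omega) k)
      (injOn_sum_prefixWeight_mul k) hlam hmu hS hSB (by omega) hexp hnuS hcnu

theorem stmt_3 {n : ℕ} (lam mu nu : Fin n → ℕ)
    (hlam : Antitone lam) (hmu : Antitone mu) (hnu : Antitone nu)
    (S : Finset (Fin n → ℕ)) (hS : ∀ κ ∈ S, Antitone κ)
    (c : (Fin n → ℕ) → ℤ)
    (hexp : altPoly lam * altPoly mu =
      altPoly (fun _ => 0) * ∑ κ ∈ S, c κ • altPoly κ)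
    (hnuS : nu ∈ S) (hcnu : c nu ≠ 0) (k : ℕ) :
    ∑ i ∈ Finset.univ.filter (fun i : Fin n => (i : ℕ) < k), nu i ≤
      (∑ i ∈ Finset.univ.filter (fun i : Fin n => (i : ℕ) < k), lam i) +
        ∑ i ∈ Finset.univ.filter (fun i : Fin n => (i : ℕ) < k), mu i :=
  stmt_3_general lam mu nu hlam hmu S hS c hexp hnuS hcnu k
end

section
/- Let Q be a quiver and for each vertex x let u_{μ(x)}, u_{ν(x)} be nonnegative integers and for each arrow a a nonnegative integer u_{λ(a)} satisfying: (i) u_{λ(a)} ≤ u_{μ(ta)} and u_{λ(a)} ≤ u_{ν(ha)} for each arrow a, (ii) Σ_{a: ta=x} u_{λ(a)} ≥ u_{μ(x)} and Σ_{b: hb=x} u_{λ(b)} ≥ u_{ν(x)} whenever these sums are over a nonempty index set, with u_{μ(x)} = 0 when x is a sink and u_{ν(x)} = 0 when x is a source. Then Σ_{x} (u_{μ(x)}² + u_{ν(x)}² − u_{μ(x)}u_{ν(x)}) − Σ_{a} u_{μ(ta)}u_{ν(ha)} ≥ E_Q(u), where u_x := max(u_{μ(x)}, u_{ν(x)}) and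 E_Q is the Euler form of Q. -/
/-!
Write `u = max m n`, `s = u - m ≥ 0` and `r = u - n ≥ 0`. Since one of `s`, `r` vanishes, the
vertex term is `u² - (m² + n² - m n) = s m + r n`, while the arrow term is
`u(ta) u(ha) - m(ta) n(ha) = s(ta) n(ha) + r(ha) m(ta) + s(ta) r(ha) ≥ (s(ta) + r(ha)) λ(a)`
because `λ(a) ≤ m(ta), n(ha)`. Distributing `m x ≤ Σ_{ta = x} λ(a)` and `n x ≤ Σ_{ha = x} λ(a)`
over the arrows then compares the vertex sum with the arrow sum.
-/

section

open Finset

variable {R : Type*} [CommRing R] [LinearOrder R]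

def eulerForm {Q₀ Q₁ : Type*} [Fintype Q₀] [Fintype Q₁] (t h : Q₁ → Q₀) (α : Q₀ → R) : R :=
  ∑ x, α x ^ 2 - ∑ a, α (t a) * α (h a)

lemma max_sq_sub_eq (m n : R) :
    max m n ^ 2 - (m ^ 2 + n ^ 2 - m * n) = (max m n - m) * m + (max m n - n) * n := by
  rcases le_total m n with hmn | hnm
  · rw [max_eq_right hmn]; ring
  · rw [max_eq_left hnm]; ring

variable [IsStrictOrderedRing R]

lemma add_mul_le_max_mul_max_sub {m n m' n' l : R} (hl : l ≤ m) (hl' : l ≤ n') :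
    (max m n - m) * l + (max m' n' - n') * l ≤ max m n * max m' n' - m * n' := by
  have hs : 0 ≤ max m n - m := sub_nonneg.2 (le_max_left _ _)
  have hr : 0 ≤ max m' n' - n' := sub_nonneg.2 (le_max_right _ _)
  calc (max m n - m) * l + (max m' n' - n') * l
      ≤ (max m n - m) * n' + (max m' n' - n') * m + (max m n - m) * (max m' n' - n') := by
        linarith [mul_le_mul_of_nonneg_left hl' hs, mul_le_mul_of_nonneg_left hl hr,
          mul_nonneg hs hr]
    _ = max m n * max m' n' - m * n' := by ring

lemma sum_mul_le_sum_comp_mul_of_le_sum_fiber {ι κ : Type*} [Fintype ι] [Fintype κ]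
    [DecidableEq κ] (f : ι → κ) {w u : κ → R} {v : ι → R} (hw : ∀ x, 0 ≤ w x)
    (hu : ∀ x, u x ≤ ∑ a with f a = x, v a) :
    ∑ x, w x * u x ≤ ∑ a, w (f a) * v a :=
  calc ∑ x, w x * u x
      ≤ ∑ x, w x * ∑ a with f a = x, v a :=
        sum_le_sum fun x _ => mul_le_mul_of_nonneg_left (hu x) (hw x)
    _ = ∑ x, ∑ a with f a = x, w (f a) * v a := by
        refine sum_congr rfl fun x _ => ?_
        rw [mul_sum]
        exact sum_congr rfl fun a ha => by rw [(mem_filter.1 ha).2]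
    _ = ∑ a, w (f a) * v a := sum_fiberwise _ _ _

lemma eulerForm_max_le {Q₀ Q₁ : Type*} [Fintype Q₀] [Fintype Q₁] [DecidableEq Q₀]
    (t h : Q₁ → Q₀) {m n : Q₀ → R} {l : Q₁ → R} (hl : ∀ a, l a ≤ m (t a) ∧ l a ≤ n (h a))
    (hm : ∀ x, m x ≤ ∑ a with t a = x, l a) (hn : ∀ x, n x ≤ ∑ a with h a = x, l a) :
    eulerForm t h (fun x => max (m x) (n x)) ≤
      ∑ x, (m x ^ 2 + n x ^ 2 - m x * n x) - ∑ a, m (t a) * n (h a) := by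
  set u := fun x => max (m x) (n x)
  have hvertices : ∑ x, (u x ^ 2 - (m x ^ 2 + n x ^ 2 - m x * n x)) ≤
      ∑ a, ((u (t a) - m (t a)) * l a + (u (h a) - n (h a)) * l a) := by
    simp only [u, max_sq_sub_eq, sum_add_distrib]
    exact add_le_add
      (sum_mul_le_sum_comp_mul_of_le_sum_fiber t (fun x => sub_nonneg.2 (le_max_left _ _)) hm)
      (sum_mul_le_sum_comp_mul_of_le_sum_fiber h (fun x => sub_nonneg.2 (le_max_right _ _)) hn)
  have harrows : ∑ a, ((u (t a) - m (t a)) * l a + (u (h a) - n (h a)) * l a) ≤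
      ∑ a, (u (t a) * u (h a) - m (t a) * n (h a)) :=
    sum_le_sum fun a _ => add_mul_le_max_mul_max_sub (hl a).1 (hl a).2
  rw [eulerForm]
  simp only [sum_sub_distrib] at hvertices harrows ⊢
  linarith

lemma natCast_le_sum_fiber {ι κ : Type*} [Fintype ι] [DecidableEq κ] (f : ι → κ)
    {u : κ → ℕ} {v : ι → ℕ} (hne : ∀ x, (∃ a, f a = x) → u x ≤ ∑ a with f a = x, v a)
    (hempty : ∀ x, (¬ ∃ a, f a = x) → u x = 0) (x : κ) :
    (u x : ℤ) ≤ ∑ a with f a = x, (v a : ℤ) := by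
  rw [← Nat.cast_sum, Nat.cast_le]
  by_cases hx : ∃ a, f a = x
  · exact hne x hx
  · simp [hempty x hx]

end

theorem stmt_7 {Q0 Q1 : Type*} [Fintype Q0] [Fintype Q1] [DecidableEq Q0]
    (t h : Q1 → Q0) (um un : Q0 → ℕ) (ul : Q1 → ℕ)
    (h1 : ∀ a, ul a ≤ um (t a) ∧ ul a ≤ un (h a))
    (h2 : ∀ x, (∃ a, t a = x) →
      um x ≤ ∑ a ∈ Finset.univ.filter (fun a => t a = x), ul a)
    (h3 : ∀ x, (∃ b, h b = x) →
      un x ≤ ∑ b ∈ Finset.univ.filter (fun b => h b = x), ul b)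
    (h4 : ∀ x, (¬ ∃ a, t a = x) → um x = 0)
    (h5 : ∀ x, (¬ ∃ b, h b = x) → un x = 0) :
    (∑ x, ((max (um x) (un x) : ℤ)) ^ 2) -
        ∑ a, (max (um (t a)) (un (t a)) : ℤ) * (max (um (h a)) (un (h a)) : ℤ) ≤
      (∑ x, ((um x : ℤ) ^ 2 + (un x : ℤ) ^ 2 - (um x : ℤ) * (un x : ℤ))) -
        ∑ a, (um (t a) : ℤ) * (un (h a) : ℤ) :=
  eulerForm_max_le t h (fun a => ⟨Int.ofNat_le.2 (h1 a).1, Int.ofNat_le.2 (h1 a).2⟩)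
    (natCast_le_sum_fiber t h2 h4) (natCast_le_sum_fiber h h3 h5)
end

section
/- Let λ = (λ₁,…,λ_m) be a partition, μ = (μ₁,…,μ_n) a partition, and suppose the weight δ = (λ₁,…,λ_m, μ₁+n,…,μ_n+n) can be made non-increasing by the exchange action. Let k be the largest integer with λ_{m−k+1}+k ≤ μ_n (with λ_{m+1}:=0). Then N(δ) = n·k + N(λ₁,…,λ_{m−k}, μ₁+n−k,…,μ_{n−1}+n−k). -/
/-- Extension of a finite sequence by zeros (so `extSeq lam i` is the 0-indexed
part `λ_{i+1}`, with `λ_j = 0` for `j` beyond the number of parts). -/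
def extSeq {m : ℕ} (lam : Fin m → ℕ) : ℕ → ℕ :=
  fun i => if h : i < m then lam ⟨i, h⟩ else 0

/-! Only pairs `i < j` with `δ i - i < δ j - j` count towards `N(δ)`. Inside the `λ`-block and
inside the `μ`-block the shifted sequence `i ↦ δ i - i` is non-increasing, so only the cross
pairs `(λ_i, μ_j)` count, with condition `λ_i - i < μ_j + n - m - j`; this condition is unchanged
in the reduced weight, where `m` and `n` both drop by `k`. By maximality of `k`, each of the last
`k` parts of `λ` forms such a pair with every part of `μ` (`n·k` pairs), while none of the first
`m - k` parts does with `μ_n`: the remaining cross pairs are those of the reduced weight. -/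

open Finset

section extSeq

variable {m : ℕ} {lam : Fin m → ℕ}

lemma extSeq_val (i : Fin m) : extSeq lam i = lam i := by
  simp [extSeq]

lemma antitone_extSeq (hlam : Antitone lam) : Antitone (extSeq lam) := by
  intro i j hij
  unfold extSeq
  split_ifs with hj hi hi
  · exact hlam (Fin.mk_le_mk.mpr hij)
  · omega
  · exact Nat.zero_le _
  · exact le_rfl

end extSeq

lemma exchNum_append_s15 {p q : ℕ} (a b : ℕ → ℤ)
    (ha : Antitone fun i : ℕ => a i - i) (hb : Antitone fun j : ℕ => b j - j) :
    exchNum (Fin.append (fun i : Fin p => a i) (fun j : Fin q => b j)) =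
      #{x ∈ range p ×ˢ range q | a x.1 - x.1 < b x.2 - (p + x.2)} := by
  symm
  refine card_bij (fun x hx => (Fin.castAdd q ⟨x.1, ?_⟩, Fin.natAdd p ⟨x.2, ?_⟩)) ?_ ?_ ?_
  · simp only [mem_filter, mem_product, mem_range] at hx; omega
  · simp only [mem_filter, mem_product, mem_range] at hx; omega
  · rintro ⟨i, j⟩ hx
    simp only [mem_filter, mem_product, mem_range] at hx
    simp only [mem_filter, mem_univ, true_and, Fin.append_left, Fin.append_right, Fin.lt_def,
      Fin.val_castAdd, Fin.val_natAdd]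
    push_cast
    omega
  · rintro ⟨i, j⟩ _ ⟨i', j'⟩ _ h
    simpa [Fin.ext_iff] using h
  · rintro ⟨x, y⟩ hxy
    simp only [mem_filter, mem_univ, true_and] at hxy
    induction x using Fin.addCases with
    | left i =>
      induction y using Fin.addCases with
      | left j =>
        simp only [Fin.append_left, Fin.lt_def, Fin.val_castAdd] at hxy
        have := ha hxy.1.le
        dsimp only at this
        omega
      | right j =>
        refine ⟨(i, j), ?_, rfl⟩
        simp only [Fin.append_left, Fin.append_right, Fin.val_castAdd, Fin.val_natAdd] at hxy
        simp only [mem_filter, mem_product, mem_range]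
        push_cast at hxy
        omega
    | right i =>
      induction y using Fin.addCases with
      | left j =>
        simp only [Fin.lt_def, Fin.val_castAdd, Fin.val_natAdd] at hxy
        omega
      | right j =>
        simp only [Fin.append_right, Fin.lt_def, Fin.val_natAdd] at hxy
        have := hb (show (i : ℕ) ≤ j by omega)
        dsimp only at this
        push_cast at hxy
        omega

lemma exchNum_append_natCast {p q : ℕ} {a b : ℕ → ℕ} (ha : Antitone a) (hb : Antitone b)
    (c : ℤ) :
    exchNum (Fin.append (fun i : Fin p => (a i : ℤ)) (fun j : Fin q => (b j : ℤ) + c)) =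
      #{x ∈ range p ×ˢ range q | (a x.1 : ℤ) - x.1 < b x.2 + c - p - x.2} := by
  rw [exchNum_append_s15 (fun i => (a i : ℤ)) (fun j => (b j : ℤ) + c)]
  · exact congrArg card (filter_congr fun x _ => by omega)
  · intro i j hij
    have := ha hij
    dsimp only
    omega
  · intro i j hij
    have := hb hij
    dsimp only
    omega

lemma add_le_of_le_findGreatest {f : ℕ → ℕ} (hf : Antitone f) {m c t : ℕ} (h0 : f m ≤ c)
    (ht : t ≤ Nat.findGreatest (fun j => f (m - j) + j ≤ c) m) : f (m - t) + t ≤ c := by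
  have hspec := Nat.findGreatest_spec (P := fun j => f (m - j) + j ≤ c) (Nat.zero_le m)
    (by simpa using h0)
  have := hf (Nat.sub_le_sub_left ht m)
  omega

lemma card_filter_range_product_eq_mul_add {m n k : ℕ} (P : ℕ → ℕ → Prop) [DecidableRel P]
    (hk : k ≤ m) (hn : 0 < n)
    (htop : ∀ i j, m - k ≤ i → i < m → j < n → P i j)
    (hlast : ∀ i < m - k, ¬ P i (n - 1)) :
    #{x ∈ range m ×ˢ range n | P x.1 x.2} =
      n * k + #{x ∈ range (m - k) ×ˢ range (n - 1) | P x.1 x.2} := by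
  obtain ⟨m, rfl⟩ := Nat.exists_eq_add_of_le' hk
  obtain ⟨n, rfl⟩ := Nat.exists_eq_add_of_lt hn
  simp only [Nat.add_sub_cancel, zero_add] at htop hlast ⊢
  have hbottom : ∀ i ∈ range m, ∑ j ∈ range (n + 1), (if P i j then 1 else 0) =
      ∑ j ∈ range n, (if P i j then 1 else 0) := fun i hi => by
    rw [sum_range_succ, if_neg (hlast i (mem_range.1 hi)), add_zero]
  have htop' : ∀ i ∈ range k, ∑ j ∈ range (n + 1), (if P (m + i) j then 1 else 0) = n + 1 :=
    fun i hi => by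
      rw [sum_congr rfl fun j hj => if_pos (htop (m + i) j (by omega)
        (by simp at hi; omega) (mem_range.1 hj))]
      simp
  rw [card_filter, card_filter, sum_product, sum_product, sum_range_add, sum_congr rfl hbottom,
    sum_congr rfl htop', sum_const, card_range, smul_eq_mul, mul_comm, add_comm]

theorem stmt_15_general {m n : ℕ} (hn : 0 < n) (lam : Fin m → ℕ) (mu : Fin n → ℕ)
    (hlam : Antitone lam) (hmu : Antitone mu)
    (δ : Fin (m + n) → ℤ)
    (hδ : δ = Fin.append (fun i => (lam i : ℤ)) (fun j => (mu j : ℤ) + (n : ℤ)))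
    (kk : ℕ)
    (hk : kk = Nat.findGreatest
      (fun j => extSeq lam (m - j) + j ≤ extSeq mu (n - 1)) m) :
    exchNum δ = n * kk +
      exchNum (Fin.append
        (fun i : Fin (m - kk) => (extSeq lam (i : ℕ) : ℤ))
        (fun j : Fin (n - 1) => (extSeq mu (j : ℕ) : ℤ) + (n : ℤ) - (kk : ℤ))) := by
  have hlam' := antitone_extSeq hlam
  have hmu' := antitone_extSeq hmu
  have hkm : kk ≤ m := hk ▸ Nat.findGreatest_le m
  let P i j := (extSeq lam i : ℤ) - i < extSeq mu j + n - m - j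
  have htop : ∀ i j, m - kk ≤ i → i < m → j < n → P i j := by
    intro i j hi him hj
    have := add_le_of_le_findGreatest hlam' (c := extSeq mu (n - 1)) (by simp [extSeq])
      (hk ▸ (show m - i ≤ kk by omega))
    rw [Nat.sub_sub_self him.le] at this
    have := hmu' (show j ≤ n - 1 by omega)
    omega
  have hlast : ∀ i < m - kk, ¬ P i (n - 1) := by
    intro i hi
    have := Nat.findGreatest_is_greatest (hk ▸ (show kk < m - i by omega)) (Nat.sub_le m i)
    rw [Nat.sub_sub_self (by omega)] at this
    simp only [P]
    omega
  have hδ' : δ = Fin.append (fun i : Fin m => (extSeq lam i : ℤ))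
      (fun j : Fin n => (extSeq mu j : ℤ) + n) := by
    simp only [hδ, extSeq_val]
  rw [hδ', exchNum_append_natCast hlam' hmu', card_filter_range_product_eq_mul_add P hkm hn htop hlast]
  simp only [add_sub_assoc]
  rw [exchNum_append_natCast hlam' hmu']
  exact congrArg (n * kk + #·) (filter_congr fun x _ => by omega)

theorem stmt_15 {m n : ℕ} (hn : 0 < n) (lam : Fin m → ℕ) (mu : Fin n → ℕ)
    (hlam : Antitone lam) (hmu : Antitone mu)
    (δ : Fin (m + n) → ℤ)
    (hδ : δ = Fin.append (fun i => (lam i : ℤ)) (fun j => (mu j : ℤ) + (n : ℤ)))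
    (hsort : Sortable δ)
    (kk : ℕ)
    (hk : kk = Nat.findGreatest
      (fun j => extSeq lam (m - j) + j ≤ extSeq mu (n - 1)) m) :
    exchNum δ = n * kk +
      exchNum (Fin.append
        (fun i : Fin (m - kk) => (extSeq lam (i : ℕ) : ℤ))
        (fun j : Fin (n - 1) => (extSeq mu (j : ℕ) : ℤ) + (n : ℤ) - (kk : ℤ))) :=
  stmt_15_general hn lam mu hlam hmu δ hδ kk hk
end
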